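/- Let r = (r¹,r²,r³) be a smooth solution of the diagonalized drift flux system (S) on an open set U ⊆ ℝ², let κ ∈ ℕ₀, and let Ω : ℝ^{κ+1} → ℝ be smooth. Set Ω̃(t,x) := Ω(ω⁰(t,x), …, ω^κ(t,x)). Then ∂_t(e^{r¹−r²} Ω̃) + ∂_x((r¹+r²) e^{r¹−r²} Ω̃) = 0 on U, i.e., (e^{r¹−r²}Ω̃, (r¹+r²)e^{r¹−r²}Ω̃) is a conserved current of (S). -/

import Mathlib

/- STATEMENT 13: for a smooth solution of (S) and any smooth Ω of ω⁰,…,ω^κ,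
the pair (e^{r¹−r²}Ω̃, (r¹+r²)e^{r¹−r²}Ω̃) is a conserved current of (S). -/

noncomputable section

/-- Partial derivative with respect to the first ("time") variable. -/
def pt (f : ℝ × ℝ → ℝ) (p : ℝ × ℝ) : ℝ := fderiv ℝ f p (1, 0)

/-- Partial derivative with respect to the second ("space") variable. -/
def px (f : ℝ × ℝ → ℝ) (p : ℝ × ℝ) : ℝ := fderiv ℝ f p (0, 1)

/-- ω⁰ := r³, ω^{j+1} := e^{r²−r¹} ∂_x ω^j. -/
def omegaFun (r₁ r₂ r₃ : ℝ × ℝ → ℝ) : ℕ → ℝ × ℝ → ℝ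
  | 0 => r₃
  | j + 1 => fun p => Real.exp (r₂ p - r₁ p) * px (omegaFun r₁ r₂ r₃ j) p

namespace Aux

open Filter

variable {f g : ℝ × ℝ → ℝ} {p v : ℝ × ℝ} {U : Set (ℝ × ℝ)}

lemma fd_mul (hf : DifferentiableAt ℝ f p) (hg : DifferentiableAt ℝ g p) (v : ℝ × ℝ) :
    fderiv ℝ (fun q => f q * g q) p v
      = f p * fderiv ℝ g p v + g p * fderiv ℝ f p v := by
  rw [fderiv_fun_mul hf hg]
  simp [smul_eq_mul]

lemma fd_exp (hf : DifferentiableAt ℝ f p) (v : ℝ × ℝ) :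
    fderiv ℝ (fun q => Real.exp (f q)) p v = Real.exp (f p) * fderiv ℝ f p v := by
  rw [hf.hasFDerivAt.exp.fderiv]
  simp [smul_eq_mul]

lemma fd_sub (hf : DifferentiableAt ℝ f p) (hg : DifferentiableAt ℝ g p) (v : ℝ × ℝ) :
    fderiv ℝ (fun q => f q - g q) p v = fderiv ℝ f p v - fderiv ℝ g p v := by
  rw [fderiv_fun_sub hf hg]; simp

lemma fd_add (hf : DifferentiableAt ℝ f p) (hg : DifferentiableAt ℝ g p) (v : ℝ × ℝ) :
    fderiv ℝ (fun q => f q + g q) p v = fderiv ℝ f p v + fderiv ℝ g p v := by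
  rw [fderiv_fun_add hf hg]; simp

lemma diffAt {F : Type*} [NormedAddCommGroup F] [NormedSpace ℝ F] {f : ℝ × ℝ → F}
    (hU : IsOpen U) (hf : ContDiffOn ℝ (⊤ : ℕ∞) f U) (hp : p ∈ U) : DifferentiableAt ℝ f p :=
  (hf.contDiffAt (hU.mem_nhds hp)).differentiableAt (by simp)

lemma contDiffOn_fderiv (hU : IsOpen U) (hf : ContDiffOn ℝ (⊤ : ℕ∞) f U) :
    ContDiffOn ℝ (⊤ : ℕ∞) (fderiv ℝ f) U :=
  hf.fderiv_of_isOpen hU (by simp)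

lemma contDiffOn_px (hU : IsOpen U) (hf : ContDiffOn ℝ (⊤ : ℕ∞) f U) :
    ContDiffOn ℝ (⊤ : ℕ∞) (px f) U :=
  (contDiffOn_fderiv hU hf).clm_apply contDiffOn_const

lemma contDiffOn_pt (hU : IsOpen U) (hf : ContDiffOn ℝ (⊤ : ℕ∞) f U) :
    ContDiffOn ℝ (⊤ : ℕ∞) (pt f) U :=
  (contDiffOn_fderiv hU hf).clm_apply contDiffOn_const

lemma clairaut (hU : IsOpen U) (hf : ContDiffOn ℝ (⊤ : ℕ∞) f U) (hp : p ∈ U) :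
    px (pt f) p = pt (px f) p := by
  have hf' : ContDiffOn ℝ (⊤ : ℕ∞) (fderiv ℝ f) U := contDiffOn_fderiv hU hf
  have hd2 : DifferentiableAt ℝ (fderiv ℝ f) p := diffAt hU hf' hp
  have hev : ∀ᶠ y in nhds p, HasFDerivAt f (fderiv ℝ f y) y := by
    filter_upwards [hU.mem_nhds hp] with y hy
    exact (diffAt hU hf hy).hasFDerivAt
  have hsymm := second_derivative_symmetric_of_eventually hev hd2.hasFDerivAt
      ((0 : ℝ), (1 : ℝ)) ((1 : ℝ), (0 : ℝ))
  have h1 : ∀ v w : ℝ × ℝ,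
      fderiv ℝ (fun q => fderiv ℝ f q w) p v = fderiv ℝ (fderiv ℝ f) p v w := by
    intro v w
    rw [fderiv_clm_apply hd2 (differentiableAt_const w)]
    simp
  show fderiv ℝ (fun q => fderiv ℝ f q (1, 0)) p (0, 1)
      = fderiv ℝ (fun q => fderiv ℝ f q (0, 1)) p (1, 0)
  rw [h1, h1, hsymm]

lemma px_eq_zero_of_eqOn (hU : IsOpen U) {g : ℝ × ℝ → ℝ}
    (hg : ∀ q ∈ U, g q = 0) (hp : p ∈ U) : px g p = 0 := by
  have h : g =ᶠ[nhds p] (fun _ => (0 : ℝ)) := by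
    filter_upwards [hU.mem_nhds hp] with y hy using hg y hy
  show fderiv ℝ g p (0, 1) = 0
  rw [h.fderiv_eq, fderiv_fun_const]
  simp

end Aux


namespace Aux

variable {r₁ r₂ r₃ : ℝ × ℝ → ℝ} {U : Set (ℝ × ℝ)}

lemma omega_smooth (hU : IsOpen U) (hr₁ : ContDiffOn ℝ (⊤ : ℕ∞) r₁ U)
    (hr₂ : ContDiffOn ℝ (⊤ : ℕ∞) r₂ U) (hr₃ : ContDiffOn ℝ (⊤ : ℕ∞) r₃ U) :
    ∀ j, ContDiffOn ℝ (⊤ : ℕ∞) (omegaFun r₁ r₂ r₃ j) U := by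
  intro j
  induction j with
  | zero => exact hr₃
  | succ j ih => exact ((hr₂.sub hr₁).exp).mul (contDiffOn_px hU ih)

lemma omega_transport (hU : IsOpen U) (hr₁ : ContDiffOn ℝ (⊤ : ℕ∞) r₁ U)
    (hr₂ : ContDiffOn ℝ (⊤ : ℕ∞) r₂ U) (hr₃ : ContDiffOn ℝ (⊤ : ℕ∞) r₃ U)
    (hS₁ : ∀ p ∈ U, pt r₁ p + (r₁ p + r₂ p + 1) * px r₁ p = 0)
    (hS₂ : ∀ p ∈ U, pt r₂ p + (r₁ p + r₂ p - 1) * px r₂ p = 0)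
    (hS₃ : ∀ p ∈ U, pt r₃ p + (r₁ p + r₂ p) * px r₃ p = 0) :
    ∀ j, ∀ p ∈ U, pt (omegaFun r₁ r₂ r₃ j) p
      + (r₁ p + r₂ p) * px (omegaFun r₁ r₂ r₃ j) p = 0 := by
  intro j
  induction j with
  | zero => exact hS₃
  | succ j ih =>
    intro p hp
    set ω := omegaFun r₁ r₂ r₃ j with hω
    have hωs : ContDiffOn ℝ (⊤ : ℕ∞) ω U := omega_smooth hU hr₁ hr₂ hr₃ j
    have hB : ContDiffOn ℝ (⊤ : ℕ∞) (px ω) U := contDiffOn_px hU hωs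
    have hA : ContDiffOn ℝ (⊤ : ℕ∞) (pt ω) U := contDiffOn_pt hU hωs
    -- differentiate the transport equation for ω in x
    have hg : px (fun q => pt ω q + (r₁ q + r₂ q) * px ω q) p = 0 :=
      px_eq_zero_of_eqOn hU ih hp
    have d1 : DifferentiableAt ℝ r₁ p := diffAt hU hr₁ hp
    have d2 : DifferentiableAt ℝ r₂ p := diffAt hU hr₂ hp
    have dA : DifferentiableAt ℝ (pt ω) p := diffAt hU hA hp
    have dB : DifferentiableAt ℝ (px ω) p := diffAt hU hB hp
    have dV : DifferentiableAt ℝ (fun q => r₁ q + r₂ q) p := d1.add d2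
    have hg' : px (pt ω) p + ((r₁ p + r₂ p) * px (px ω) p
        + px ω p * (px r₁ p + px r₂ p)) = 0 := by
      have e1 : px (fun q => pt ω q + (r₁ q + r₂ q) * px ω q) p
          = px (pt ω) p + ((r₁ p + r₂ p) * px (px ω) p
              + px ω p * (px r₁ p + px r₂ p)) := by
        show fderiv ℝ (fun q => pt ω q + (r₁ q + r₂ q) * px ω q) p (0,1) = _
        rw [fd_add dA (dV.fun_mul dB), fd_mul dV dB, fd_add d1 d2]
        rfl
      rw [← e1]; exact hg
    have hcl : px (pt ω) p = pt (px ω) p := clairaut hU hωs hp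
    -- the key estimate: D(px ω) = -(px r₁ + px r₂) * px ω
    have hkey : pt (px ω) p + (r₁ p + r₂ p) * px (px ω) p
        = -(px r₁ p + px r₂ p) * px ω p := by
      rw [← hcl]; linarith [hg']
    -- now expand D(ω^{j+1})
    have hs1 := hS₁ p hp
    have hs2 := hS₂ p hp
    have dE : DifferentiableAt ℝ (fun q => Real.exp (r₂ q - r₁ q)) p :=
      (d2.sub d1).exp
    have hexp : ∀ v : ℝ × ℝ,
        fderiv ℝ (fun q => Real.exp (r₂ q - r₁ q) * px ω q) p v
          = Real.exp (r₂ p - r₁ p) * fderiv ℝ (px ω) p v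
            + px ω p * (Real.exp (r₂ p - r₁ p)
                * (fderiv ℝ r₂ p v - fderiv ℝ r₁ p v)) := by
      intro v
      rw [fd_mul dE dB, fd_exp (d2.fun_sub d1), fd_sub d2 d1]
    show pt (fun q => Real.exp (r₂ q - r₁ q) * px ω q) p
        + (r₁ p + r₂ p) * px (fun q => Real.exp (r₂ q - r₁ q) * px ω q) p = 0
    have ept : pt (fun q => Real.exp (r₂ q - r₁ q) * px ω q) p
        = Real.exp (r₂ p - r₁ p) * pt (px ω) p
          + px ω p * (Real.exp (r₂ p - r₁ p) * (pt r₂ p - pt r₁ p)) := hexp (1,0)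
    have epx : px (fun q => Real.exp (r₂ q - r₁ q) * px ω q) p
        = Real.exp (r₂ p - r₁ p) * px (px ω) p
          + px ω p * (Real.exp (r₂ p - r₁ p) * (px r₂ p - px r₁ p)) := hexp (0,1)
    rw [ept, epx]
    linear_combination Real.exp (r₂ p - r₁ p) * hkey
      + px ω p * Real.exp (r₂ p - r₁ p) * hs2
      - px ω p * Real.exp (r₂ p - r₁ p) * hs1

end Aux

open Aux in
theorem first_family_conserved_currents
    (U : Set (ℝ × ℝ)) (hU : IsOpen U)
    (r₁ r₂ r₃ : ℝ × ℝ → ℝ)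
    (hr₁ : ContDiffOn ℝ (⊤ : ℕ∞) r₁ U) (hr₂ : ContDiffOn ℝ (⊤ : ℕ∞) r₂ U)
    (hr₃ : ContDiffOn ℝ (⊤ : ℕ∞) r₃ U)
    (hS₁ : ∀ p ∈ U, pt r₁ p + (r₁ p + r₂ p + 1) * px r₁ p = 0)
    (hS₂ : ∀ p ∈ U, pt r₂ p + (r₁ p + r₂ p - 1) * px r₂ p = 0)
    (hS₃ : ∀ p ∈ U, pt r₃ p + (r₁ p + r₂ p) * px r₃ p = 0)
    (κ : ℕ) (Ω : (Fin (κ + 1) → ℝ) → ℝ) (hΩ : ContDiff ℝ (⊤ : ℕ∞) Ω) :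
    let Ωt : ℝ × ℝ → ℝ := fun p => Ω (fun j => omegaFun r₁ r₂ r₃ j.1 p)
    ∀ p ∈ U,
      pt (fun q => Real.exp (r₁ q - r₂ q) * Ωt q) p
        + px (fun q => (r₁ q + r₂ q) * Real.exp (r₁ q - r₂ q) * Ωt q) p = 0 := by
  intro Ωt p hp
  set W : ℝ × ℝ → (Fin (κ + 1) → ℝ) := fun p j => omegaFun r₁ r₂ r₃ j.1 p with hW
  have hWs : ContDiffOn ℝ (⊤ : ℕ∞) W U :=
    contDiffOn_pi.2 fun j => omega_smooth hU hr₁ hr₂ hr₃ j.1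
  have hΩts : ContDiffOn ℝ (⊤ : ℕ∞) Ωt U := hΩ.comp_contDiffOn hWs
  have d1 : DifferentiableAt ℝ r₁ p := diffAt hU hr₁ hp
  have d2 : DifferentiableAt ℝ r₂ p := diffAt hU hr₂ hp
  have dΩt : DifferentiableAt ℝ Ωt p := diffAt hU hΩts hp
  have dW : DifferentiableAt ℝ W p := diffAt hU hWs hp
  have dWj : ∀ j : Fin (κ + 1), DifferentiableAt ℝ (omegaFun r₁ r₂ r₃ j.1) p :=
    fun j => diffAt hU (omega_smooth hU hr₁ hr₂ hr₃ j.1) hp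
  -- Ωt satisfies the transport equation
  have hfd : ∀ v : ℝ × ℝ, fderiv ℝ Ωt p v = fderiv ℝ Ω (W p) (fderiv ℝ W p v) := by
    intro v
    have : fderiv ℝ Ωt p = (fderiv ℝ Ω (W p)).comp (fderiv ℝ W p) :=
      fderiv_comp p (hΩ.differentiable (by simp) (W p)) dW
    rw [this]; rfl
  have hWpi : ∀ v : ℝ × ℝ, fderiv ℝ W p v
      = fun j : Fin (κ + 1) => fderiv ℝ (omegaFun r₁ r₂ r₃ j.1) p v := by
    intro v
    rw [hW, fderiv_pi dWj]
    rfl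
  have hT : pt Ωt p + (r₁ p + r₂ p) * px Ωt p = 0 := by
    show fderiv ℝ Ωt p (1, 0) + (r₁ p + r₂ p) * fderiv ℝ Ωt p (0, 1) = 0
    rw [hfd, hfd]
    have : fderiv ℝ Ω (W p) (fderiv ℝ W p (1, 0))
          + (r₁ p + r₂ p) * fderiv ℝ Ω (W p) (fderiv ℝ W p (0, 1))
        = fderiv ℝ Ω (W p)
            (fderiv ℝ W p (1, 0) + (r₁ p + r₂ p) • fderiv ℝ W p (0, 1)) := by
      rw [map_add, map_smul]; simp [smul_eq_mul]
    rw [this]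
    have hz : fderiv ℝ W p (1, 0) + (r₁ p + r₂ p) • fderiv ℝ W p (0, 1) = 0 := by
      rw [hWpi, hWpi]
      funext j
      have := omega_transport hU hr₁ hr₂ hr₃ hS₁ hS₂ hS₃ j.1 p hp
      simpa [pt, px, Pi.add_apply, Pi.smul_apply, smul_eq_mul] using this
    rw [hz, map_zero]
  -- expand the two derivatives
  have dE : DifferentiableAt ℝ (fun q => Real.exp (r₁ q - r₂ q)) p := (d1.sub d2).exp
  have dVE : DifferentiableAt ℝ (fun q => (r₁ q + r₂ q) * Real.exp (r₁ q - r₂ q)) p :=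
    (d1.add d2).mul dE
  have hE : ∀ v : ℝ × ℝ, fderiv ℝ (fun q => Real.exp (r₁ q - r₂ q)) p v
      = Real.exp (r₁ p - r₂ p) * (fderiv ℝ r₁ p v - fderiv ℝ r₂ p v) := by
    intro v; rw [fd_exp (d1.fun_sub d2), fd_sub d1 d2]
  have ept : pt (fun q => Real.exp (r₁ q - r₂ q) * Ωt q) p
      = Real.exp (r₁ p - r₂ p) * pt Ωt p
        + Ωt p * (Real.exp (r₁ p - r₂ p) * (pt r₁ p - pt r₂ p)) := by
    show fderiv ℝ (fun q => Real.exp (r₁ q - r₂ q) * Ωt q) p (1, 0) = _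
    rw [fd_mul dE dΩt, hE]
    rfl
  have epx : px (fun q => (r₁ q + r₂ q) * Real.exp (r₁ q - r₂ q) * Ωt q) p
      = (r₁ p + r₂ p) * Real.exp (r₁ p - r₂ p) * px Ωt p
        + Ωt p * ((r₁ p + r₂ p) * (Real.exp (r₁ p - r₂ p) * (px r₁ p - px r₂ p))
            + Real.exp (r₁ p - r₂ p) * (px r₁ p + px r₂ p)) := by
    show fderiv ℝ (fun q => (r₁ q + r₂ q) * Real.exp (r₁ q - r₂ q) * Ωt q) p (0, 1) = _
    rw [fd_mul dVE dΩt, fd_mul (d1.fun_add d2) dE, hE, fd_add d1 d2]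
    rfl
  rw [ept, epx]
  have hs1 := hS₁ p hp
  have hs2 := hS₂ p hp
  linear_combination Real.exp (r₁ p - r₂ p) * hT
    + Ωt p * Real.exp (r₁ p - r₂ p) * hs1
    - Ωt p * Real.exp (r₁ p - r₂ p) * hs2

end
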